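/- ACE bounds: Under assumption (i) (joint independence of the instrument from all potential outcomes), the average causal effect ACE(X → Y) = P(Y(x_1) = 1) − P(Y(x_0) = 1) satisfies 1 − g(1, 0) − g(0, 1) ≤ ACE(X → Y) ≤ g(0, 0) + g(1, 1) − 1. -/

import Mathlib

open MeasureTheory ProbabilityTheory

/-!
By independence of `Z`, each observed conditional law is a law of potential variables:
`P(X = x, Y = y | Z = z) = P(X(z) = x, Y(x) = y)`. The event `Y(xᵢ) = j` is covered by
`{X(z) = i, Y(xᵢ) = j} ∪ {X(z) = 1 - i}` and, for `z ≠ z̃`, by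
`{X(z) = i, Y(xᵢ) = j} ∪ {X(z) = 1 - i, Y(x₁₋ᵢ) = 0}`
`∪ {X(z̃) = i, Y(xᵢ) = j} ∪ {X(z̃) = 1 - i, Y(x₁₋ᵢ) = 1}`,
so the union bound gives `P(Y(xᵢ) = j) ≤ g(i, j)`. Both ACE bounds follow from these four
inequalities and `P(Y(xᵢ) = 0) = 1 - P(Y(xᵢ) = 1)`.
-/

/-- The bound `g(i, j)` of Theorem 2, expressed in terms of conditional laws
`p z x y` (interpreted as `P(X = x, Y = y | Z = z)`):
`g(i,j) = min{ min_z [ p_z(X=i,Y=j) + p_z(X=1−i) ],`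
`min_{z ≠ z̃} [ p_z(X=i,Y=j) + p_z(X=1−i,Y=0) + p_{z̃}(X=i,Y=j) + p_{z̃}(X=1−i,Y=1) ] }`,
where `p_z(X = 1−i) = p_z(X=1−i, Y=0) + p_z(X=1−i, Y=1)`. -/
noncomputable def gOf {K : ℕ} (hK : 2 ≤ K) (p : Fin K → Fin 2 → Fin 2 → ℝ)
    (i j : Fin 2) : ℝ :=
  min
    ((Finset.univ : Finset (Fin K)).inf'
      ⟨⟨0, by omega⟩, Finset.mem_univ _⟩
      (fun z => p z i j + (p z (1 - i) 0 + p z (1 - i) 1)))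
    (((Finset.univ : Finset (Fin K × Fin K)).filter (fun q => q.1 ≠ q.2)).inf'
      ⟨(⟨0, by omega⟩, ⟨1, by omega⟩), by
        simp only [Finset.mem_filter, Finset.mem_univ, true_and]
        exact fun h => absurd (congrArg Fin.val h) (by simp)⟩
      (fun q => p q.1 i j + p q.1 (1 - i) 0 + p q.2 i j + p q.2 (1 - i) 1))

theorem ProbabilityTheory.IndepFun.cond_preimage_eq {Ω ι β : Type*} [MeasurableSpace Ω]
    [MeasurableSpace ι] [MeasurableSpace β] {P : Measure Ω} [IsFiniteMeasure P]
    {Z : Ω → ι} {V : Ω → β} (hindep : IndepFun Z V P) (hZ : Measurable Z)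
    {S : Set ι} (hS : MeasurableSet S) (hpos : P (Z ⁻¹' S) ≠ 0)
    {A : Set β} (hA : MeasurableSet A) :
    P[V ⁻¹' A | Z ⁻¹' S] = P (V ⁻¹' A) := by
  rw [cond_apply (hZ hS), hindep.measure_inter_preimage_eq_mul _ _ hS hA, ← mul_assoc,
    ENNReal.inv_mul_cancel hpos (measure_ne_top _ _), one_mul]

section PotentialOutcomes

variable {Ω : Type*} [MeasurableSpace Ω] {P : Measure Ω}

theorem probReal_eq_zero_eq_one_sub [IsProbabilityMeasure P] {W : Ω → Fin 2}
    (hW : Measurable W) :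
    P.real {ω | W ω = 0} = 1 - P.real {ω | W ω = 1} := by
  rw [← probReal_compl_eq_one_sub (s := {ω | W ω = 1}) (hW (measurableSet_singleton 1))]
  congr 1
  ext ω
  simp only [Set.mem_ofPred_eq, Set.mem_compl_iff]
  generalize W ω = w
  revert w
  decide

theorem cond_observed_eq_potential {ι : Type*} [MeasurableSpace ι] [MeasurableSingletonClass ι]
    [IsFiniteMeasure P] {Z : Ω → ι} {Xz : ι → Ω → Fin 2} {Yx : Fin 2 → Ω → Fin 2}
    {X Y : Ω → Fin 2} (hZ : Measurable Z) (hX : ∀ ω, X ω = Xz (Z ω) ω)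
    (hY : ∀ ω, Y ω = Yx (X ω) ω)
    (hindep : IndepFun Z (fun ω => (fun x => Yx x ω, fun z => Xz z ω)) P)
    {z : ι} (hpos : P (Z ⁻¹' {z}) ≠ 0) (x y : Fin 2) :
    P[{ω | X ω = x ∧ Y ω = y} | Z ⁻¹' {z}] = P {ω | Xz z ω = x ∧ Yx x ω = y} := by
  have hs : MeasurableSet (Z ⁻¹' {z}) := hZ (measurableSet_singleton z)
  have hobs : Z ⁻¹' {z} ∩ {ω | X ω = x ∧ Y ω = y}
      = Z ⁻¹' {z} ∩ {ω | Xz z ω = x ∧ Yx x ω = y} := by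
    ext ω
    simp only [Set.mem_inter_iff, Set.mem_preimage, Set.mem_singleton_iff, Set.mem_ofPred_eq]
    refine and_congr_right fun hz => ?_
    rw [hY, hX, hz]
    exact and_congr_right fun hx => by rw [hx]
  rw [← cond_inter_self hs, hobs, cond_inter_self hs]
  exact hindep.cond_preimage_eq hZ (measurableSet_singleton z) hpos
    (A := {p | p.2 z = x ∧ p.1 x = y}) (by measurability)

variable [IsFiniteMeasure P]

theorem measureReal_le_of_treatment (T V W : Ω → Fin 2) (i j : Fin 2) :
    P.real {ω | V ω = j} ≤ P.real {ω | T ω = i ∧ V ω = j}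
      + P.real {ω | T ω = 1 - i ∧ W ω = 0} + P.real {ω | T ω = 1 - i ∧ W ω = 1} := by
  calc P.real {ω | V ω = j}
      ≤ P.real ({ω | T ω = i ∧ V ω = j} ∪ {ω | T ω = 1 - i ∧ W ω = 0}
          ∪ {ω | T ω = 1 - i ∧ W ω = 1}) := by
        refine measureReal_mono fun ω (hω : V ω = j) => ?_
        simp only [Set.mem_union, Set.mem_ofPred_eq, hω]
        generalize T ω = t, W ω = w
        revert t w i
        decide
    _ ≤ _ := (measureReal_union_le _ _).trans (by gcongr; exact measureReal_union_le _ _)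

theorem measureReal_le_of_two_treatments (T T' V W : Ω → Fin 2) (i j : Fin 2) :
    P.real {ω | V ω = j} ≤ P.real {ω | T ω = i ∧ V ω = j} + P.real {ω | T ω = 1 - i ∧ W ω = 0}
      + P.real {ω | T' ω = i ∧ V ω = j} + P.real {ω | T' ω = 1 - i ∧ W ω = 1} := by
  calc P.real {ω | V ω = j}
      ≤ P.real ({ω | T ω = i ∧ V ω = j} ∪ {ω | T ω = 1 - i ∧ W ω = 0}
          ∪ {ω | T' ω = i ∧ V ω = j} ∪ {ω | T' ω = 1 - i ∧ W ω = 1}) := by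
        refine measureReal_mono fun ω (hω : V ω = j) => ?_
        simp only [Set.mem_union, Set.mem_ofPred_eq, hω]
        generalize T ω = t, T' ω = t', W ω = w
        revert t t' w i
        decide
    _ ≤ _ := (measureReal_union_le _ _).trans (by
        gcongr; exact (measureReal_union_le _ _).trans (by gcongr; exact measureReal_union_le _ _))

theorem measureReal_potentialOutcome_le_gOf {K : ℕ} (hK : 2 ≤ K) {Z : Ω → Fin K}
    {Xz : Fin K → Ω → Fin 2} {Yx : Fin 2 → Ω → Fin 2} {X Y : Ω → Fin 2} (hZ : Measurable Z)
    (hX : ∀ ω, X ω = Xz (Z ω) ω) (hY : ∀ ω, Y ω = Yx (X ω) ω)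
    (hpos : ∀ z, P (Z ⁻¹' {z}) ≠ 0)
    (hindep : IndepFun Z (fun ω => (fun x => Yx x ω, fun z => Xz z ω)) P) (i j : Fin 2) :
    P.real {ω | Yx i ω = j} ≤
      gOf hK (fun z x y => (P[|Z ⁻¹' {z}] {ω | X ω = x ∧ Y ω = y}).toReal) i j := by
  have hobs z x y : (P[|Z ⁻¹' {z}] {ω | X ω = x ∧ Y ω = y}).toReal
      = P.real {ω | Xz z ω = x ∧ Yx x ω = y} :=
    congrArg ENNReal.toReal (cond_observed_eq_potential hZ hX hY hindep (hpos z) x y)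
  simp only [gOf, hobs]
  refine le_min (Finset.le_inf' _ _ fun z _ => ?_) (Finset.le_inf' _ _ fun q _ => ?_)
  · linarith [measureReal_le_of_treatment (P := P) (Xz z) (Yx i) (Yx (1 - i)) i j]
  · exact measureReal_le_of_two_treatments (Xz q.1) (Xz q.2) (Yx i) (Yx (1 - i)) i j

end PotentialOutcomes

theorem stmt10_general
    {Ω : Type*} [MeasurableSpace Ω] (P : Measure Ω) [IsProbabilityMeasure P]
    (K : ℕ) (hK : 2 ≤ K)
    (Z : Ω → Fin K) (Xz : Fin K → Ω → Fin 2) (Y0 Y1 : Ω → Fin 2)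
    (hZ : Measurable Z)
    (hY0 : Measurable Y0) (hY1 : Measurable Y1)
    (X : Ω → Fin 2) (hX : ∀ ω, X ω = Xz (Z ω) ω)
    (Y : Ω → Fin 2) (hY : ∀ ω, Y ω = if X ω = 0 then Y0 ω else Y1 ω)
    (hpos : ∀ z, 0 < P (Z ⁻¹' {z}))
    (hindep : IndepFun Z (fun ω => (Y0 ω, Y1 ω, fun z => Xz z ω)) P) :
    1 - gOf hK (fun z x y => (P[|Z ⁻¹' {z}] {ω | X ω = x ∧ Y ω = y}).toReal) 1 0
      - gOf hK (fun z x y => (P[|Z ⁻¹' {z}] {ω | X ω = x ∧ Y ω = y}).toReal) 0 1 ≤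
      (P {ω | Y1 ω = 1}).toReal - (P {ω | Y0 ω = 1}).toReal ∧
    (P {ω | Y1 ω = 1}).toReal - (P {ω | Y0 ω = 1}).toReal ≤
      gOf hK (fun z x y => (P[|Z ⁻¹' {z}] {ω | X ω = x ∧ Y ω = y}).toReal) 0 0
      + gOf hK (fun z x y => (P[|Z ⁻¹' {z}] {ω | X ω = x ∧ Y ω = y}).toReal) 1 1 - 1 := by
  have hY' ω : Y ω = ![Y0, Y1] (X ω) ω := by
    rw [hY]
    generalize X ω = x
    fin_cases x <;> rfl
  have hindep' : IndepFun Z (fun ω => (fun x => ![Y0, Y1] x ω, fun z => Xz z ω)) P := by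
    have hcomp : (fun ω => (fun x => ![Y0, Y1] x ω, fun z => Xz z ω))
        = (fun p : Fin 2 × Fin 2 × (Fin K → Fin 2) => (![p.1, p.2.1], p.2.2))
          ∘ (fun ω => (Y0 ω, Y1 ω, fun z => Xz z ω)) := by
      funext ω
      refine Prod.ext (funext fun x => ?_) rfl
      fin_cases x <;> rfl
    rw [hcomp]
    exact hindep.comp measurable_id (measurable_of_countable _)
  have bound := measureReal_potentialOutcome_le_gOf hK hZ hX hY' (fun z => (hpos z).ne') hindep'
  have b00 := bound 0 0
  have b01 := bound 0 1
  have b10 := bound 1 0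
  have b11 := bound 1 1
  simp only [Matrix.cons_val_zero, Matrix.cons_val_one, probReal_eq_zero_eq_one_sub hY0,
    probReal_eq_zero_eq_one_sub hY1, measureReal_def] at b00 b01 b10 b11
  exact ⟨by linarith, by linarith⟩

/-- ACE bounds: under assumption (i) (joint independence of the instrument
from all potential outcomes), the average causal effect
`ACE(X → Y) = P(Y(x₁) = 1) − P(Y(x₀) = 1)` satisfies
`1 − g(1,0) − g(0,1) ≤ ACE(X → Y) ≤ g(0,0) + g(1,1) − 1`, where `g` is evaluated at the
observed conditional laws `P(X = x, Y = y | Z = z)`. -/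
theorem stmt10
    {Ω : Type*} [MeasurableSpace Ω] (P : Measure Ω) [IsProbabilityMeasure P]
    (K : ℕ) (hK : 2 ≤ K)
    (Z : Ω → Fin K) (Xz : Fin K → Ω → Fin 2) (Y0 Y1 : Ω → Fin 2)
    (hZ : Measurable Z) (hXz : ∀ z, Measurable (Xz z))
    (hY0 : Measurable Y0) (hY1 : Measurable Y1)
    (X : Ω → Fin 2) (hX : ∀ ω, X ω = Xz (Z ω) ω)
    (Y : Ω → Fin 2) (hY : ∀ ω, Y ω = if X ω = 0 then Y0 ω else Y1 ω)
    (hpos : ∀ z, 0 < P (Z ⁻¹' {z}))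
    (hindep : IndepFun Z (fun ω => (Y0 ω, Y1 ω, fun z => Xz z ω)) P) :
    1 - gOf hK (fun z x y => (P[|Z ⁻¹' {z}] {ω | X ω = x ∧ Y ω = y}).toReal) 1 0
      - gOf hK (fun z x y => (P[|Z ⁻¹' {z}] {ω | X ω = x ∧ Y ω = y}).toReal) 0 1 ≤
      (P {ω | Y1 ω = 1}).toReal - (P {ω | Y0 ω = 1}).toReal ∧
    (P {ω | Y1 ω = 1}).toReal - (P {ω | Y0 ω = 1}).toReal ≤
      gOf hK (fun z x y => (P[|Z ⁻¹' {z}] {ω | X ω = x ∧ Y ω = y}).toReal) 0 0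
      + gOf hK (fun z x y => (P[|Z ⁻¹' {z}] {ω | X ω = x ∧ Y ω = y}).toReal) 1 1 - 1 :=
  stmt10_general P K hK Z Xz Y0 Y1 hZ hY0 hY1 X hX Y hY hpos hindep
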